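/- Let X = (X_1,...,X_p), p ≥ 5, with independent components, and f(X) = (a_1 X_1 + a_2 X_2) 1_{X_5 ≤ 0} + (a_3 X_3 + a_4 X_4) 1_{X_5 > 0}. For any observation x with x_5 ≤ 0, the Shapley value of X_3 equals φ_3 = K · a_3 (x_3 − E[X_3]), where K = (1/p) · P(X_5 > 0) · Σ_{S ⊆ {1,...,p}\{3,5}} C(p−1, |S|)⁻¹ > 0 whenever P(X_5 > 0) > 0. In particular, φ_3 ≠ 0 whenever a_3 ≠ 0, x_3 ≠ E[X_3], and P(X_5 > 0) > 0, even though the prediction f(x) does not depend on x_3. -/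

import Mathlib

/-!
Write `f = G + a₃ X₃ 1_{X₅ > 0}`, where `G` depends only on the coordinates other than `X₃`.
By independence, pinning `X₃ = x₃` does not change the conditional expectation of `G` or of
`1_{X₅ > 0}` given `X_S = x_S`, and `E[X₃ 1_{X₅ > 0} | X_S = x_S] = E[X₃] P(X₅ > 0 | X_S = x_S)`
for `3 ∉ S`. So the marginal contribution of `X₃` to `S` is `a₃ (x₃ - E[X₃]) P(X₅ > 0 | X_S = x_S)`,
which vanishes when `5 ∈ S` (as `x₅ ≤ 0`) and equals `a₃ (x₃ - E[X₃]) P(X₅ > 0)` otherwise.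
-/

open MeasureTheory ProbabilityTheory

namespace ProbabilityTheory

section Indep

variable {Ω : Type*} {m₁ m₂ mΩ : MeasurableSpace Ω} {μ : Measure Ω}

theorem Indep.indepFun_of_measurable {β γ : Type*} [MeasurableSpace β] [MeasurableSpace γ]
    (hind : Indep m₁ m₂ μ) {f : Ω → β} {g : Ω → γ} (hf : Measurable[m₁] f)
    (hg : Measurable[m₂] g) : IndepFun f g μ :=
  (IndepFun_iff_Indep f g μ).2
    (indep_of_indep_of_le_left (indep_of_indep_of_le_right hind hg.comap_le) hf.comap_le)

theorem Indep.setIntegral_mul (hm₁ : m₁ ≤ mΩ) (hm₂ : m₂ ≤ mΩ) (hind : Indep m₁ m₂ μ)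
    {f g : Ω → ℝ} (hf : Measurable[m₁] f) (hg : Measurable[m₂] g) {A : Set Ω}
    (hA : MeasurableSet[m₂] A) :
    ∫ ω in A, f ω * g ω ∂μ = (∫ ω, f ω ∂μ) * ∫ ω in A, g ω ∂μ := by
  have hfg : IndepFun f (A.indicator g) μ := hind.indepFun_of_measurable hf (hg.indicator hA)
  simp_rw [← integral_indicator (hm₂ _ hA), Set.indicator_mul_right]
  rw [hfg.integral_fun_mul_eq_mul_integral (hf.mono hm₁ le_rfl).aestronglyMeasurable
      ((hg.indicator hA).mono hm₂ le_rfl).aestronglyMeasurable]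

theorem integral_cond_eq_inv_mul_setIntegral {E : Type*} [NormedAddCommGroup E] [NormedSpace ℝ E]
    (g : Ω → E) (A : Set Ω) :
    ∫ ω, g ω ∂μ[|A] = (μ.real A)⁻¹ • ∫ ω in A, g ω ∂μ := by
  rw [cond, integral_smul_measure, measureReal_def, ENNReal.toReal_inv]

theorem _root_.MeasureTheory.Integrable.cond {E : Type*} [NormedAddCommGroup E] {g : Ω → E}
    (hg : Integrable g μ) (A : Set Ω) : Integrable g μ[|A] := by
  by_cases hA : μ A = 0
  · simp [cond_eq_zero_of_meas_eq_zero hA]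
  · exact hg.restrict.smul_measure (ENNReal.inv_ne_top.2 hA)

theorem Indep.cond_eq [IsFiniteMeasure μ] (hm₂ : m₂ ≤ mΩ) (hind : Indep m₁ m₂ μ) {A B : Set Ω}
    (hB : MeasurableSet[m₁] B) (hA : MeasurableSet[m₂] A) (hA0 : μ A ≠ 0) : μ[B|A] = μ B := by
  rw [cond_apply (hm₂ _ hA), Set.inter_comm, (Indep_iff _ _ _).1 hind _ _ hB hA, mul_comm,
    mul_assoc, ENNReal.mul_inv_cancel hA0 (measure_ne_top μ A), mul_one]

theorem Indep.integral_cond_mul (hm₁ : m₁ ≤ mΩ) (hm₂ : m₂ ≤ mΩ) (hind : Indep m₁ m₂ μ)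
    {f g : Ω → ℝ} (hf : Measurable[m₁] f) (hg : Measurable[m₂] g) {A : Set Ω}
    (hA : MeasurableSet[m₂] A) :
    ∫ ω, f ω * g ω ∂μ[|A] = (∫ ω, f ω ∂μ) * ∫ ω, g ω ∂μ[|A] := by
  rw [integral_cond_eq_inv_mul_setIntegral, integral_cond_eq_inv_mul_setIntegral,
    hind.setIntegral_mul hm₁ hm₂ hf hg hA, smul_eq_mul, smul_eq_mul, mul_left_comm]

theorem Indep.integral_cond_inter [IsFiniteMeasure μ] (hm₁ : m₁ ≤ mΩ) (hm₂ : m₂ ≤ mΩ)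
    (hind : Indep m₁ m₂ μ) {g : Ω → ℝ} (hg : Measurable[m₂] g) {A B : Set Ω}
    (hA : MeasurableSet[m₂] A) (hB : MeasurableSet[m₁] B) (hB0 : μ B ≠ 0) :
    ∫ ω, g ω ∂μ[|A ∩ B] = ∫ ω, g ω ∂μ[|A] := by
  have hB0' : μ.real B ≠ 0 := (measureReal_ne_zero_iff).2 hB0
  have hmass : μ.real (A ∩ B) = μ.real B * μ.real A := by
    rw [Set.inter_comm, measureReal_def, (Indep_iff _ _ _).1 hind _ _ hB hA, ENNReal.toReal_mul]
    rfl
  have hset : ∫ ω in A ∩ B, g ω ∂μ = μ.real B * ∫ ω in A, g ω ∂μ := by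
    rw [← setIntegral_indicator (hm₁ _ hB)]
    simpa only [← Set.indicator_mul_left, one_mul, integral_indicator_const _ (hm₁ _ hB),
      smul_eq_mul, mul_one] using
      hind.setIntegral_mul hm₁ hm₂ ((measurable_const (a := (1 : ℝ))).indicator hB) hg hA
  rw [integral_cond_eq_inv_mul_setIntegral, integral_cond_eq_inv_mul_setIntegral, hmass, hset,
    smul_eq_mul, smul_eq_mul, mul_comm (μ.real B), mul_inv, mul_assoc, inv_mul_cancel_left₀ hB0']

end Indep

section Family

variable {Ω ι : Type*} {mΩ : MeasurableSpace Ω} {μ : Measure Ω} {X : ι → Ω → ℝ}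

abbrev sigmaOf (X : ι → Ω → ℝ) (T : Set ι) : MeasurableSpace Ω :=
  ⨆ i ∈ T, MeasurableSpace.comap (X i) inferInstance

theorem sigmaOf_le (hXm : ∀ i, Measurable (X i)) (T : Set ι) :
    sigmaOf X T ≤ mΩ :=
  iSup₂_le fun i _ => (hXm i).comap_le

theorem measurable_sigmaOf {T : Set ι} {i : ι} (hi : i ∈ T) : Measurable[sigmaOf X T] (X i) :=
  (comap_measurable (X i)).mono (le_iSup₂ (f := fun i _ => MeasurableSpace.comap (X i) _) i hi)
    le_rfl

theorem measurableSet_sigmaOf_pinned {S : Finset ι} {T : Set ι} (hST : ↑S ⊆ T) (x : ι → ℝ) :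
    MeasurableSet[sigmaOf X T] {ω | ∀ i ∈ S, X i ω = x i} := by
  simp only [Set.ofPred_forall]
  exact MeasurableSet.biInter S.countable_toSet fun i hi =>
    measurable_sigmaOf (hST hi) (measurableSet_singleton (x i))

theorem iIndepFun.indep_sigmaOf (hXm : ∀ i, Measurable (X i)) (hindep : iIndepFun X μ)
    {S T : Set ι} (hST : Disjoint S T) : Indep (sigmaOf X S) (sigmaOf X T) μ :=
  indep_iSup_of_disjoint (fun i => (hXm i).comap_le) hindep.iIndep hST

theorem integral_cond_insert_sub_integral_cond [DecidableEq ι]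
    (hXm : ∀ i, Measurable (X i)) (hindep : iIndepFun X μ) {j : ι} {S : Finset ι} (hjS : j ∉ S)
    {x : ι → ℝ} (hxj : μ (X j ⁻¹' {x j}) ≠ 0) (hXj : Integrable (X j) μ) {G h : Ω → ℝ}
    (hGm : Measurable[sigmaOf X {j}ᶜ] G) (hG : Integrable G μ)
    (hhm : Measurable[sigmaOf X {j}ᶜ] h) (hh : Integrable h μ) (c : ℝ) :
    ∫ ω, G ω + c * (X j ω * h ω) ∂μ[|{ω | ∀ i ∈ insert j S, X i ω = x i}]
      - ∫ ω, G ω + c * (X j ω * h ω) ∂μ[|{ω | ∀ i ∈ S, X i ω = x i}]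
      = c * (x j - ∫ ω, X j ω ∂μ) * ∫ ω, h ω ∂μ[|{ω | ∀ i ∈ S, X i ω = x i}] := by
  have := hindep.isProbabilityMeasure
  set A := {ω | ∀ i ∈ S, X i ω = x i}
  set B := X j ⁻¹' {x j}
  have hAB : {ω | ∀ i ∈ insert j S, X i ω = x i} = A ∩ B := by
    ext ω
    simp [A, B, and_comm]
  have hm₁ := sigmaOf_le hXm {j}
  have hm₂ := sigmaOf_le hXm {j}ᶜ
  have hind : Indep (sigmaOf X {j}) (sigmaOf X {j}ᶜ) μ :=
    hindep.indep_sigmaOf hXm disjoint_compl_right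
  have hA : MeasurableSet[sigmaOf X {j}ᶜ] A :=
    measurableSet_sigmaOf_pinned (fun i hi => by rintro rfl; exact hjS hi) x
  have hXjm : Measurable[sigmaOf X {j}] (X j) := measurable_sigmaOf rfl
  have hB : MeasurableSet[sigmaOf X {j}] B := hXjm (measurableSet_singleton _)
  have hXjh : Integrable (fun ω => X j ω * h ω) μ :=
    (hind.indepFun_of_measurable hXjm hhm).integrable_mul hXj hh
  have hpinned : ∫ ω, X j ω * h ω ∂μ[|A ∩ B] = x j * ∫ ω, h ω ∂μ[|A ∩ B] := by
    rw [← integral_const_mul]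
    refine integral_congr_ae ?_
    filter_upwards [ae_cond_mem ((hm₂ _ hA).inter (hm₁ _ hB))] with ω hω
    rw [show X j ω = x j from hω.2]
  rw [hAB, integral_add (hG.cond _) ((hXjh.const_mul c).cond _),
    integral_add (hG.cond _) ((hXjh.const_mul c).cond _), integral_const_mul, integral_const_mul,
    hind.integral_cond_inter hm₁ hm₂ hGm hA hB hxj, hpinned,
    hind.integral_cond_inter hm₁ hm₂ hhm hA hB hxj, hind.integral_cond_mul hm₁ hm₂ hXjm hhm hA]
  ring

theorem cond_preimage_eq_of_notMem (hXm : ∀ i, Measurable (X i))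
    (hindep : iIndepFun X μ) {k : ι} {S : Finset ι} (hkS : k ∉ S) {x : ι → ℝ}
    (hS : μ {ω | ∀ i ∈ S, X i ω = x i} ≠ 0) {E : Set ℝ} (hE : MeasurableSet E) :
    μ[X k ⁻¹' E | {ω | ∀ i ∈ S, X i ω = x i}] = μ (X k ⁻¹' E) :=
  have := hindep.isProbabilityMeasure
  (hindep.indep_sigmaOf hXm (Set.disjoint_singleton_left.2 hkS)).cond_eq (sigmaOf_le hXm _)
    (measurable_sigmaOf (Set.mem_singleton k) hE) (measurableSet_sigmaOf_pinned subset_rfl x) hS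

theorem cond_preimage_eq_zero_of_mem (hXm : ∀ i, Measurable (X i)) {k : ι} {S : Finset ι}
    (hkS : k ∈ S) {x : ι → ℝ} {E : Set ℝ} (hxk : x k ∉ E) :
    μ[X k ⁻¹' E | {ω | ∀ i ∈ S, X i ω = x i}] = 0 := by
  have hdisj : {ω | ∀ i ∈ S, X i ω = x i} ∩ X k ⁻¹' E = ∅ :=
    Set.eq_empty_of_forall_notMem fun ω hω => hxk (hω.1 k hkS ▸ hω.2)
  rw [cond_apply (sigmaOf_le hXm _ _ (measurableSet_sigmaOf_pinned subset_rfl x)), hdisj,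
    measure_empty, mul_zero]

theorem integral_cond_insert_sub_integral_cond_switch [DecidableEq ι]
    (hXm : ∀ i, Measurable (X i)) (hindep : iIndepFun X μ) (hint : ∀ i, Integrable (X i) μ)
    {i₀ i₁ j i₃ k : ι} (h₀ : i₀ ≠ j) (h₁ : i₁ ≠ j) (h₃ : i₃ ≠ j) (hk : k ≠ j) {a₁ a₂ a₃ a₄ : ℝ}
    {F : Ω → ℝ} (hF : ∀ ω, F ω = (a₁ * X i₀ ω + a₂ * X i₁ ω) * (if X k ω ≤ 0 then 1 else 0) +
      (a₃ * X j ω + a₄ * X i₃ ω) * (if 0 < X k ω then 1 else 0))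
    {x : ι → ℝ} (hxk : x k ≤ 0) (hxj : μ (X j ⁻¹' {x j}) ≠ 0) {S : Finset ι} (hjS : j ∉ S)
    (hS : μ {ω | ∀ i ∈ S, X i ω = x i} ≠ 0) :
    ∫ ω, F ω ∂μ[|{ω | ∀ i ∈ insert j S, X i ω = x i}] - ∫ ω, F ω ∂μ[|{ω | ∀ i ∈ S, X i ω = x i}]
      = (if k ∈ S then 0 else (μ {ω | 0 < X k ω}).toReal) * (a₃ * (x j - ∫ ω, X j ω ∂μ)) := by
  have := hindep.isProbabilityMeasure
  set I : Set Ω := {ω | 0 < X k ω}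
  set G : Ω → ℝ := fun ω => {ω | X k ω ≤ 0}.indicator (fun ω => a₁ * X i₀ ω + a₂ * X i₁ ω) ω +
    I.indicator (fun ω => a₄ * X i₃ ω) ω
  set h : Ω → ℝ := I.indicator 1
  have hFGh : F = fun ω => G ω + a₃ * (X j ω * h ω) := by
    funext ω
    rcases le_or_gt (X k ω) 0 with hω | hω
    · simp [hF, G, h, I, hω, Set.indicator_apply, not_lt.2 hω]
    · simp only [hF, G, h, I, hω, not_le.2 hω, ↓reduceIte, Set.indicator_apply,
        Set.mem_ofPred_eq, Pi.one_apply, mul_zero, mul_one, zero_add]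
      ring
  have hXc : ∀ {i}, i ≠ j → Measurable[sigmaOf X {j}ᶜ] (X i) := fun hi => measurable_sigmaOf hi
  have hI : MeasurableSet[sigmaOf X {j}ᶜ] I := hXc hk measurableSet_Ioi
  have hGm : Measurable[sigmaOf X {j}ᶜ] G :=
    ((((hXc h₀).const_mul a₁).add ((hXc h₁).const_mul a₂)).indicator
      (hXc hk measurableSet_Iic)).add (((hXc h₃).const_mul a₄).indicator hI)
  have hG : Integrable G μ :=
    ((((hint _).const_mul a₁).add ((hint _).const_mul a₂)).indicator
      ((hXm k) measurableSet_Iic)).add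
        (((hint _).const_mul a₄).indicator ((hXm k) measurableSet_Ioi))
  have hhm : Measurable[sigmaOf X {j}ᶜ] h := measurable_const.indicator hI
  have hh : Integrable h μ := (integrable_const 1).indicator ((hXm k) measurableSet_Ioi)
  simp only [hFGh]
  rw [integral_cond_insert_sub_integral_cond hXm hindep hjS hxj (hint j) hGm hG hhm hh,
    integral_indicator_one ((sigmaOf_le hXm _) _ hI), measureReal_def,
    show I = X k ⁻¹' Set.Ioi 0 from rfl]
  split_ifs with hkS
  · rw [cond_preimage_eq_zero_of_mem hXm hkS (E := Set.Ioi 0) (not_lt.2 hxk), ENNReal.toReal_zero]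
    ring
  · rw [cond_preimage_eq_of_notMem hXm hindep hkS hS measurableSet_Ioi]
    ring

end Family

end ProbabilityTheory

theorem Finset.sum_powerset_ite_mem_eq_sum_powerset_erase {α M : Type*} [AddCommMonoid M]
    [DecidableEq α] (T : Finset α) (k : α) (w : Finset α → M) :
    ∑ S ∈ T.powerset, (if k ∈ S then 0 else w S) = ∑ S ∈ (T.erase k).powerset, w S := by
  rw [Finset.sum_ite, Finset.sum_const_zero, zero_add]
  congr 1
  ext S
  simp only [Finset.mem_filter, Finset.mem_powerset, Finset.subset_iff, Finset.mem_erase]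
  grind

/-- For `f(X) = (a₁X₁+a₂X₂)1_{X₅≤0} + (a₃X₃+a₄X₄)1_{X₅>0}` with independent
components and `x₅ ≤ 0`, the Shapley value of `X₃` equals
`φ₃ = K·a₃(x₃ − E[X₃])` with
`K = (1/p)·P(X₅>0)·Σ_{S ⊆ [p]\{3,5}} C(p−1,|S|)⁻¹`; `K > 0` whenever
`P(X₅>0) > 0`, so `φ₃ ≠ 0` whenever moreover `a₃ ≠ 0` and `x₃ ≠ E[X₃]`, even
though the prediction does not depend on `x₃`.
(Indices `0,…,4` stand for `X₁,…,X₅`.) -/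
theorem shapley_not_local
    {Ω : Type*} [MeasurableSpace Ω] (μ : Measure Ω) [IsProbabilityMeasure μ]
    (p : ℕ) (hp : 5 ≤ p) (X : Fin p → Ω → ℝ) (hXm : ∀ i, Measurable (X i))
    (hindep : ProbabilityTheory.iIndepFun X μ)
    (hint : ∀ i, Integrable (X i) μ)
    (a₁ a₂ a₃ a₄ : ℝ) (x : Fin p → ℝ)
    (hx5 : x ⟨4, by omega⟩ ≤ 0)
    (hpos : ∀ S : Finset (Fin p), μ {ω | ∀ i ∈ S, X i ω = x i} ≠ 0)
    (F : Ω → ℝ)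
    (hF : ∀ ω, F ω = (a₁ * X ⟨0, by omega⟩ ω + a₂ * X ⟨1, by omega⟩ ω) *
          (if X ⟨4, by omega⟩ ω ≤ 0 then (1 : ℝ) else 0) +
        (a₃ * X ⟨2, by omega⟩ ω + a₄ * X ⟨3, by omega⟩ ω) *
          (if 0 < X ⟨4, by omega⟩ ω then (1 : ℝ) else 0))
    (v : Finset (Fin p) → ℝ)
    (hv : ∀ S, v S = ∫ ω, F ω ∂(ProbabilityTheory.cond μ
      {ω | ∀ i ∈ S, X i ω = x i}))
    (φ₃ : ℝ)
    (hφ₃ : φ₃ = (p : ℝ)⁻¹ *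
      ∑ S ∈ (Finset.univ.erase ⟨2, by omega⟩).powerset,
        (((p - 1).choose S.card : ℕ) : ℝ)⁻¹ *
          (v (insert ⟨2, by omega⟩ S) - v S))
    (K : ℝ)
    (hK : K = (p : ℝ)⁻¹ * (μ {ω | 0 < X ⟨4, by omega⟩ ω}).toReal *
      ∑ S ∈ ((Finset.univ \ {(⟨2, by omega⟩ : Fin p), ⟨4, by omega⟩}) :
          Finset (Fin p)).powerset,
        (((p - 1).choose S.card : ℕ) : ℝ)⁻¹) :
    φ₃ = K * (a₃ * (x ⟨2, by omega⟩ - ∫ ω, X ⟨2, by omega⟩ ω ∂μ)) ∧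
      (μ {ω | 0 < X ⟨4, by omega⟩ ω} ≠ 0 → 0 < K) ∧
      (a₃ ≠ 0 → x ⟨2, by omega⟩ ≠ (∫ ω, X ⟨2, by omega⟩ ω ∂μ) →
        μ {ω | 0 < X ⟨4, by omega⟩ ω} ≠ 0 → φ₃ ≠ 0) := by
  set j : Fin p := ⟨2, by omega⟩
  set k : Fin p := ⟨4, by omega⟩
  have hdiff : ∀ S ∈ (Finset.univ.erase j).powerset, v (insert j S) - v S =
      (if k ∈ S then 0 else (μ {ω | 0 < X k ω}).toReal) * (a₃ * (x j - ∫ ω, X j ω ∂μ)) :=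
    fun S hS => by
      rw [hv, hv]
      exact integral_cond_insert_sub_integral_cond_switch hXm hindep hint (by simp [j, Fin.ext_iff])
        (by simp [j, Fin.ext_iff]) (by simp [j, Fin.ext_iff]) (by simp [j, k, Fin.ext_iff]) hF hx5
        (by simpa [Set.preimage] using hpos {j})
        (Finset.notMem_of_mem_powerset_of_notMem hS (Finset.notMem_erase j _)) (hpos S)
  have hKpos : μ {ω | 0 < X k ω} ≠ 0 → 0 < K := fun hI => by
    have hsum : 0 < ∑ S ∈ (Finset.univ \ {j, k}).powerset, (((p - 1).choose S.card : ℕ) : ℝ)⁻¹ :=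
      Finset.sum_pos' (fun _ _ => by positivity) ⟨∅, Finset.empty_mem_powerset _, by simp⟩
    have hμI : 0 < (μ {ω | 0 < X k ω}).toReal := ENNReal.toReal_pos hI (measure_ne_top μ _)
    rw [hK]
    positivity
  have hφ : φ₃ = K * (a₃ * (x j - ∫ ω, X j ω ∂μ)) := by
    have herase : (Finset.univ.erase j).erase k = Finset.univ \ {j, k} := by
      ext i
      simp [and_comm]
    rw [hφ₃, Finset.sum_congr rfl fun S hS => by rw [hdiff S hS], hK, ← herase,
      ← Finset.sum_powerset_ite_mem_eq_sum_powerset_erase _ k]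
    simp only [Finset.mul_sum, Finset.sum_mul]
    refine Finset.sum_congr rfl fun S _ => ?_
    split_ifs <;> ring
  refine ⟨hφ, hKpos, fun ha₃ hxj hI => ?_⟩
  rw [hφ]
  exact mul_ne_zero (hKpos hI).ne' (mul_ne_zero ha₃ (sub_ne_zero.2 hxj))
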